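/- Let q ≥ 1 and k ≥ 2 be integers and let α_1, …, α_q be probability vectors, α_t = (α_{t,1}, …, α_{t,k}) with 0 < α_{t,j} < 1 and α_{t,1} + ⋯ + α_{t,k} = 1. There exists a constant C > 0, depending only on k, q and the α_t, such that for all integers n ≥ 2, all integers d ≥ 1, all integers g_1, …, g_{k−1}, and all integers 0 ≤ i_1, …, i_q ≤ n with i_1 + ⋯ + i_q = n, one has | L − 1/d^{k−1} | ≤ C·(log n)/√n, where L = ∑ ∏_{t=1}^q ( i_t! / (s_{t,1}! ⋯ s_{t,k}!) ) α_{t,1}^{s_{t,1}} ⋯ α_{t,k}^{s_{t,k}}, the sum being over all tuples of nonnegative integers (s_{t,1}, …, s_{t,k}) for 1 ≤ t ≤ q satisfying s_{t,1} + ⋯ + s_{t,k} = i_t for every t and satisfying the congruences s^{(a)} ≡ g_a (mod d) for a = 1, …, k − 1, where s^{(a)} := s_{1,a} + ⋯ + s_{q,a}. -/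

import Mathlib

/-
Detecting the congruences with the additive characters of `ZMod d`, and extending the character
vector `r` by `r_k = 0`, turns `L` into
  `d^{-(k-1)} ∑_r e(-r·g/d) ∏_t (∑_j α_{t,j} e(r_j/d))^{i_t}`,
whose term at `r = 0` is the main term `d^{-(k-1)}`. Comparing the coordinates `a` and `k` of a
factor gives `|∑_j α_{t,j} e(r_j/d)| ≤ exp(-8 α_min² ‖r_a/d‖²)` for every `a < k` (with `‖·‖` the
distance to `ℤ`), so the term at `r` is at most the Gaussian weight `∏_a exp(-β ‖r_a/d‖²)` with
`β = 8 α_min² n/(k-1)`. These weights sum to `S^{k-1}`, where `S = ∑_{u mod d} exp(-β ‖u/d‖²)`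
satisfies `1 ≤ S ≤ d` and `S ≤ 1 + 4d/√β`; hence the terms with `r ≠ 0` contribute at most
`(k-1)(S-1)/d ≤ 4(k-1)/√β = O(1/√n)`.
-/

open Finset Real
open ZMod (stdAddChar)

lemma sum_piFinset_piAntidiag_prod_multinomial {R ι κ : Type*} [CommSemiring R] [Fintype ι]
    [DecidableEq ι] [Fintype κ] [DecidableEq κ] (z : ι → κ → R) (n : ι → ℕ) :
    ∑ s ∈ Fintype.piFinset fun t => piAntidiag univ (n t),
        ∏ t, (Nat.multinomial univ (s t) : R) * ∏ j, z t j ^ s t j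
      = ∏ t, (∑ j, z t j) ^ n t := by
  simp_rw [sum_pow_eq_sum_piAntidiag, prod_univ_sum]

lemma filter_piFinset_range_eq_filter_piAntidiag {ι κ : Type*} [Fintype ι] [DecidableEq ι]
    [Fintype κ] [DecidableEq κ] (n : ι → ℕ) (P : (ι → κ → ℕ) → Prop) [DecidablePred P]
    [DecidablePred fun s : ι → κ → ℕ => (∀ t, ∑ j, s t j = n t) ∧ P s] :
    (Fintype.piFinset fun t => Fintype.piFinset fun _ : κ => range (n t + 1)).filter
        (fun s => (∀ t, ∑ j, s t j = n t) ∧ P s)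
      = (Fintype.piFinset fun t => piAntidiag univ (n t)).filter P := by
  ext s
  simp only [mem_filter, Fintype.mem_piFinset, mem_piAntidiag, mem_range, Nat.lt_succ_iff,
    mem_univ, implies_true, and_true]
  refine ⟨fun ⟨_, hsum, hP⟩ => ⟨hsum, hP⟩, fun ⟨hsum, hP⟩ => ⟨fun t j => ?_, hsum, hP⟩⟩
  exact hsum t ▸ single_le_sum (fun j _ => Nat.zero_le (s t j)) (mem_univ j)

lemma AddChar.map_sum_eq_prod {A M ι : Type*} [AddCommMonoid A] [CommMonoid M] (ψ : AddChar A M)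
    (s : Finset ι) (f : ι → A) : ψ (∑ i ∈ s, f i) = ∏ i ∈ s, ψ (f i) := by
  induction s using Finset.cons_induction <;> simp [*, AddChar.map_add_eq_mul]

lemma AddChar.prod_snoc_zero_pow {R M : Type*} [CommRing R] [CommMonoid M] {m : ℕ}
    (ψ : AddChar R M) (r : Fin m → R) (s : Fin (m + 1) → ℕ) :
    ∏ j, ψ ((Fin.snoc r 0 : Fin (m + 1) → R) j) ^ s j = ψ (∑ a, r a * s a.castSucc) := by
  simp [Fin.prod_univ_castSucc, AddChar.map_sum_eq_prod, ← AddChar.map_nsmul_eq_pow, mul_comm]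

lemma norm_ofReal_mul_add_ofReal_le {A B : ℝ} (hA : 0 ≤ A) (hB : 0 ≤ B) (hAB : A + B ≤ 1)
    {z : ℂ} (hz : ‖z‖ ≤ 1) : ‖(A : ℂ) * z + B‖ ≤ A + B - A * B * (1 - z.re) := by
  have hz2 : z.re * z.re + z.im * z.im ≤ 1 := by
    rw [← Complex.normSq_apply, ← Complex.sq_norm]
    nlinarith [norm_nonneg z]
  have hre : |z.re| ≤ 1 := (Complex.abs_re_le_norm z).trans hz
  have hAB' : A * B * (1 - z.re) ≤ A + B := by
    nlinarith [abs_le.1 hre, mul_nonneg hA hB, mul_nonneg hA (by linarith : 0 ≤ 1 - B),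
      mul_nonneg hB (by linarith : 0 ≤ 1 - A)]
  rw [← pow_le_pow_iff_left₀ (norm_nonneg _) (by linarith) two_ne_zero, Complex.sq_norm,
    Complex.normSq_apply]
  simp only [Complex.add_re, Complex.add_im, Complex.mul_re, Complex.mul_im, Complex.ofReal_re,
    Complex.ofReal_im]
  -- `‖Az + B‖² ≤ (A + B)² - 2AB(1 - Re z)`, and `A + B ≤ 1` absorbs the square of `AB(1 - Re z)`.
  nlinarith [mul_nonneg (mul_nonneg (mul_nonneg hA hB) (by linarith [abs_le.1 hre] : 0 ≤ 1 - z.re))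
    (by linarith : 0 ≤ 1 - A - B), sq_nonneg (A * B * (1 - z.re)), mul_nonneg hA hA]

lemma norm_sum_ofReal_mul_le {ι : Type*} [Fintype ι] [DecidableEq ι] {α : ι → ℝ}
    (hα : ∀ j, 0 ≤ α j) (hsum : ∑ j, α j = 1) {z : ι → ℂ} (hz : ∀ j, ‖z j‖ ≤ 1) {i₀ i₁ : ι}
    (hne : i₀ ≠ i₁) (hz₁ : z i₁ = 1) :
    ‖∑ j, (α j : ℂ) * z j‖ ≤ 1 - α i₀ * α i₁ * (1 - (z i₀).re) := by
  have hsplit : ∀ f : ι → ℂ, ∑ j, f j = ∑ j ∈ univ \ {i₀, i₁}, f j + (f i₀ + f i₁) := fun f => by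
    rw [← sum_pair hne, sum_sdiff (subset_univ _)]
  have hrest : ∑ j ∈ univ \ {i₀, i₁}, α j = 1 - (α i₀ + α i₁) := by
    rw [← hsum, ← sum_pair hne, ← sum_sdiff (subset_univ {i₀, i₁})]
    ring
  calc ‖∑ j, (α j : ℂ) * z j‖
      ≤ ‖∑ j ∈ univ \ {i₀, i₁}, (α j : ℂ) * z j‖ + ‖(α i₀ : ℂ) * z i₀ + α i₁‖ := by
        rw [hsplit, hz₁, mul_one]
        exact norm_add_le _ _
    _ ≤ ∑ j ∈ univ \ {i₀, i₁}, α j + (α i₀ + α i₁ - α i₀ * α i₁ * (1 - (z i₀).re)) := by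
        gcongr
        · refine (norm_sum_le _ _).trans (sum_le_sum fun j _ => ?_)
          rw [norm_mul, Complex.norm_real, norm_of_nonneg (hα j)]
          exact mul_le_of_le_one_right (hα j) (hz j)
        · have := sum_nonneg fun j (_ : j ∈ univ \ {i₀, i₁}) => hα j
          exact norm_ofReal_mul_add_ofReal_le (hα i₀) (hα i₁) (by linarith) (hz i₀)
    _ = 1 - α i₀ * α i₁ * (1 - (z i₀).re) := by rw [hrest]; ring

lemma le_exp_neg_sum_div_card {ι : Type*} [Fintype ι] [Nonempty ι] {x : ℝ} {y : ι → ℝ}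
    (h : ∀ i, x ≤ exp (-y i)) : x ≤ exp (-(∑ i, y i) / Fintype.card ι) := by
  obtain ⟨i, hi⟩ := Finite.exists_max y
  refine (h i).trans (exp_le_exp.2 ?_)
  rw [neg_div, neg_le_neg_iff, div_le_iff₀ (by exact_mod_cast Fintype.card_pos)]
  simpa [mul_comm] using sum_le_card_nsmul univ y (y i) fun j _ => hi j

lemma sum_Ico_exp_neg_pow_le {y : ℝ} (hy : 0 < y) (N : ℕ) :
    ∑ u ∈ Ico 1 N, exp (-y) ^ u ≤ 1 / y := by
  have hq : exp (-y) < 1 := exp_lt_one_iff.2 (by linarith)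
  refine (geom_sum_Ico_le_of_lt_one (exp_pos _).le hq).trans ?_
  rw [pow_one, div_le_div_iff₀ (by linarith) hy]
  have hinv : exp (-y) * exp y = 1 := by rw [← exp_add, neg_add_cancel, exp_zero]
  nlinarith [add_one_le_exp y, exp_pos (-y)]

lemma sum_Ico_exp_neg_mul_sq_le {γ : ℝ} (hγ : 0 < γ) (N : ℕ) :
    ∑ u ∈ Ico 1 N, exp (-(γ * (u : ℝ) ^ 2)) ≤ 2 / √γ := by
  have hsγ : 0 < √γ := sqrt_pos.2 hγ
  set M := ⌊1 / √γ⌋₊ + 1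
  have hM : 1 / √γ ≤ M := by
    simpa only [M, Nat.cast_add, Nat.cast_one] using (Nat.lt_floor_add_one (1 / √γ)).le
  have hterm : ∀ u ∈ Ico 1 N,
      exp (-(γ * (u : ℝ) ^ 2)) ≤ (if u < M then 1 else 0) + exp (-(γ * M)) ^ u := by
    intro u _
    split_ifs with hu
    · exact le_add_of_le_of_nonneg (exp_le_one_iff.2 (by nlinarith)) (by positivity)
    · have : (M : ℝ) ≤ u := by exact_mod_cast not_lt.1 hu
      rw [zero_add, ← exp_nat_mul]
      exact exp_le_exp.2 (by nlinarith [mul_le_mul_of_nonneg_left this (by positivity : 0 ≤ γ * u)])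
  have hcard : (#{u ∈ Ico 1 N | u < M} : ℝ) ≤ 1 / √γ := by
    have : #{u ∈ Ico 1 N | u < M} ≤ #(Ico 1 M) :=
      card_le_card fun u hu => by simp only [mem_filter, mem_Ico] at hu ⊢; omega
    rw [Nat.card_Ico, Nat.add_sub_cancel] at this
    exact (Nat.cast_le.2 this).trans (Nat.floor_le (by positivity))
  have hgeom : ∑ u ∈ Ico 1 N, exp (-(γ * M)) ^ u ≤ 1 / √γ := by
    refine (sum_Ico_exp_neg_pow_le (by positivity) N).trans (one_div_le_one_div_of_le hsγ ?_)
    calc √γ = γ * (1 / √γ) := by field_simp; rw [sq_sqrt hγ.le]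
      _ ≤ γ * M := by gcongr
  calc ∑ u ∈ Ico 1 N, exp (-(γ * (u : ℝ) ^ 2))
      ≤ ∑ u ∈ Ico 1 N, ((if u < M then 1 else 0) + exp (-(γ * M)) ^ u) := sum_le_sum hterm
    _ = #{u ∈ Ico 1 N | u < M} + ∑ u ∈ Ico 1 N, exp (-(γ * M)) ^ u := by
        rw [sum_add_distrib, sum_boole]
    _ ≤ 1 / √γ + 1 / √γ := add_le_add hcard hgeom
    _ = 2 / √γ := by ring

lemma inv_pow_card_mul_sum_erase_prod_le {α : Type*} [Fintype α] [DecidableEq α] (m : ℕ)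
    {h : α → ℝ} {u₀ : α} (h₀ : h u₀ = 1) (hnn : ∀ u, 0 ≤ h u) (hle : ∀ u, h u ≤ 1) :
    ((Fintype.card α : ℝ) ^ m)⁻¹ * ∑ r ∈ univ.erase (fun _ : Fin m => u₀), ∏ a, h (r a)
      ≤ m * (∑ u, h u - 1) / Fintype.card α := by
  set S := ∑ u, h u
  have hc : (0 : ℝ) < Fintype.card α := by exact_mod_cast Fintype.card_pos_iff.2 ⟨u₀⟩
  have hS1 : 1 ≤ S := h₀ ▸ single_le_sum (fun u _ => hnn u) (mem_univ u₀)
  have hSc : S ≤ Fintype.card α := by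
    simpa using sum_le_sum fun u (_ : u ∈ univ) => hle u
  have hsum : ∑ r ∈ univ.erase (fun _ : Fin m => u₀), ∏ a, h (r a) = S ^ m - 1 := by
    rw [sum_erase_eq_sub (mem_univ _), ← Fintype.prod_sum]
    simp [S, h₀]
  rw [hsum, inv_mul_le_iff₀ (by positivity)]
  obtain _ | k := m
  · simp
  have hpow := (le_abs_self _).trans (abs_pow_sub_pow_le S 1 (k + 1))
  rw [one_pow, abs_one, Nat.add_sub_cancel, abs_of_nonneg (sub_nonneg.2 hS1),
    abs_of_nonneg (zero_le_one.trans hS1), max_eq_left hS1] at hpow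
  calc S ^ (k + 1) - 1 ≤ (S - 1) * (k + 1 : ℕ) * S ^ k := hpow
    _ ≤ (S - 1) * (k + 1 : ℕ) * (Fintype.card α : ℝ) ^ k := by gcongr
    _ = (Fintype.card α : ℝ) ^ (k + 1) * ((k + 1 : ℕ) * (S - 1) / Fintype.card α) := by
        field_simp; ring

section

variable {d : ℕ} [NeZero d] {q m : ℕ}

lemma ite_modEq_eq_sum_stdAddChar (x g : ℤ) :
    (if x ≡ g [ZMOD d] then 1 else 0 : ℂ)
      = (d : ℂ)⁻¹ * ∑ r : ZMod d, stdAddChar (r * ((x : ZMod d) - (g : ZMod d))) := by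
  simp_rw [AddChar.sum_mulShift _ (ZMod.isPrimitive_stdAddChar d), ZMod.card, sub_eq_zero,
    ZMod.intCast_eq_intCast_iff]
  split_ifs <;> simp [NeZero.ne]

lemma ite_forall_modEq_eq_sum_stdAddChar {ι : Type*} [Fintype ι] [DecidableEq ι] (x g : ι → ℤ)
    [Decidable (∀ a, x a ≡ g a [ZMOD d])] :
    (if ∀ a, x a ≡ g a [ZMOD d] then 1 else 0 : ℂ)
      = ((d : ℂ) ^ Fintype.card ι)⁻¹ *
          ∑ r : ι → ZMod d, stdAddChar (∑ a, r a * ((x a : ZMod d) - (g a : ZMod d))) := by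
  calc _ = ∏ a, (if x a ≡ g a [ZMOD d] then 1 else 0 : ℂ) := by rw [Fintype.prod_boole]; congr
    _ = _ := by
      simp_rw [ite_modEq_eq_sum_stdAddChar, prod_mul_distrib, prod_const, card_univ, inv_pow,
        Fintype.prod_sum, AddChar.map_sum_eq_prod]

lemma sq_valMinAbs_le_one_sub_re_stdAddChar (u : ZMod d) :
    8 / (d : ℝ) ^ 2 * (u.valMinAbs : ℝ) ^ 2 ≤ 1 - (stdAddChar u).re := by
  have hd : (0 : ℝ) < d := by exact_mod_cast NeZero.pos d
  set v := u.valMinAbs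
  have hv : |(v : ℝ)| ≤ d / 2 := by
    rw [← Int.cast_abs, Int.abs_eq_natAbs, Int.cast_natCast]
    exact (Nat.cast_le.2 u.natAbs_valMinAbs_le).trans (Nat.cast_div_le)
  have hre : (stdAddChar u).re = cos (2 * π * v / d) := by
    rw [← ZMod.coe_valMinAbs u, ZMod.stdAddChar_coe, ← Complex.exp_ofReal_mul_I_re]
    congr 2; push_cast; ring
  have hθ : |2 * π * v / d| ≤ π := by
    rw [abs_div, abs_mul, abs_of_pos (by positivity : 0 < 2 * π), abs_of_pos hd, div_le_iff₀ hd]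
    nlinarith [pi_pos]
  have := cos_le_one_sub_mul_cos_sq hθ
  rw [hre]
  convert sub_le_sub_left this 1 using 1
  field_simp; ring

lemma sum_exp_neg_mul_sq_valMinAbs_le {γ : ℝ} (hγ : 0 < γ) :
    ∑ u : ZMod d, exp (-(γ * (u.valMinAbs : ℝ) ^ 2)) ≤ 1 + 4 / √γ := by
  set f : ℕ → ℝ := fun a => exp (-(γ * (a : ℝ) ^ 2))
  have hmin : ∀ u ∈ univ.erase (0 : ZMod d),
      exp (-(γ * (u.valMinAbs : ℝ) ^ 2)) ≤ f u.val + f (-u).val := by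
    intro u hu
    rw [ZMod.neg_val, if_neg (ne_of_mem_erase hu), ← sq_abs, ← Int.cast_abs, Int.abs_eq_natAbs,
      ZMod.valMinAbs_natAbs_eq_min, Int.cast_natCast]
    rcases min_choice u.val (d - u.val) with h | h <;> rw [h] <;> simp only [f] <;>
      linarith [exp_pos (-(γ * (u.val : ℝ) ^ 2)), exp_pos (-(γ * ((d - u.val : ℕ) : ℝ) ^ 2))]
  have hneg : ∑ u ∈ univ.erase (0 : ZMod d), f (-u).val = ∑ u ∈ univ.erase (0 : ZMod d), f u.val :=
    sum_nbij' (fun u => -u) (fun u => -u) (by simp) (by simp) (by simp) (by simp) (by simp)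
  have hval : ∑ u ∈ univ.erase (0 : ZMod d), f u.val ≤ 2 / √γ := by
    rw [← sum_image fun u _ v _ h => ZMod.val_injective d h]
    refine (sum_le_sum_of_subset_of_nonneg ?_ fun _ _ _ => (exp_pos _).le).trans
      (sum_Ico_exp_neg_mul_sq_le hγ d)
    intro a ha
    obtain ⟨u, hu, rfl⟩ := mem_image.1 ha
    exact mem_Ico.2 ⟨Nat.one_le_iff_ne_zero.2 ((ZMod.val_ne_zero u).2 (ne_of_mem_erase hu)),
      ZMod.val_lt u⟩
  have hsum := sum_le_sum hmin
  rw [sum_add_distrib, hneg] at hsum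
  have h0 : exp (-(γ * ((0 : ZMod d).valMinAbs : ℝ) ^ 2)) = 1 := by simp
  rw [← add_sum_erase _ _ (mem_univ 0), h0]
  linarith [show 4 / √γ = 2 / √γ + 2 / √γ by ring]

/-- The character vector `r` is extended by `0` in the last coordinate, which is the one not
constrained by a congruence. -/
noncomputable def fourierTerm (w : Fin q → Fin (m + 1) → ℂ) (g : Fin m → ℤ) (n : Fin q → ℕ)
    (r : Fin m → ZMod d) : ℂ :=
  stdAddChar (-∑ a, r a * (g a : ZMod d)) *
    ∏ t, (∑ j, w t j * stdAddChar ((Fin.snoc r 0 : Fin (m + 1) → ZMod d) j)) ^ n t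

lemma fourierTerm_zero (w : Fin q → Fin (m + 1) → ℂ) (g : Fin m → ℤ) (n : Fin q → ℕ) :
    fourierTerm w g n (fun _ => (0 : ZMod d)) = ∏ t, (∑ j, w t j) ^ n t := by
  have hsnoc : (Fin.snoc (fun _ => 0) 0 : Fin (m + 1) → ZMod d) = fun _ => 0 := by
    ext j
    induction j using Fin.lastCases <;> simp
  simp [fourierTerm, hsnoc]

lemma stdAddChar_sum_mul_sub_eq_mul_prod (s : Fin q → Fin (m + 1) → ℕ) (g : Fin m → ℤ)
    (r : Fin m → ZMod d) :
    stdAddChar (∑ a, r a * ((((∑ t, s t a.castSucc : ℕ) : ℤ) : ZMod d) - (g a : ZMod d)))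
      = stdAddChar (-∑ a, r a * (g a : ZMod d)) *
          ∏ t, ∏ j, stdAddChar ((Fin.snoc r 0 : Fin (m + 1) → ZMod d) j) ^ s t j := by
  simp_rw [AddChar.prod_snoc_zero_pow, ← AddChar.map_sum_eq_prod, ← AddChar.map_add_eq_mul]
  congr 1
  push_cast
  simp_rw [mul_sub, sum_sub_distrib, mul_sum]
  rw [sum_comm]
  ring

theorem sum_filter_modEq_eq_sum_fourierTerm (w : Fin q → Fin (m + 1) → ℂ) (g : Fin m → ℤ)
    (n : Fin q → ℕ) :
    ∑ s ∈ (Fintype.piFinset fun t => piAntidiag univ (n t)).filter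
        (fun s => ∀ a, ((∑ t, s t a.castSucc : ℕ) : ℤ) ≡ g a [ZMOD d]),
      ∏ t, (Nat.multinomial univ (s t) : ℂ) * ∏ j, w t j ^ s t j
      = ((d : ℂ) ^ m)⁻¹ * ∑ r : Fin m → ZMod d, fourierTerm w g n r := by
  rw [sum_filter, sum_congr rfl fun s _ => (mul_boole _ _).symm]
  simp_rw [ite_forall_modEq_eq_sum_stdAddChar, Fintype.card_fin,
    stdAddChar_sum_mul_sub_eq_mul_prod, mul_sum, mul_left_comm _ ((d : ℂ) ^ m)⁻¹]
  rw [sum_comm]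
  refine sum_congr rfl fun r _ => ?_
  rw [fourierTerm, ← sum_piFinset_piAntidiag_prod_multinomial, mul_sum, mul_sum]
  refine sum_congr rfl fun s _ => ?_
  simp_rw [mul_pow, prod_mul_distrib]
  ring

lemma ofReal_sum_filter_modEq_sub_eq_sum_erase {α : Fin q → Fin (m + 1) → ℝ}
    (hsum : ∀ t, ∑ j, α t j = 1) (g : Fin m → ℤ) (n : Fin q → ℕ) :
    (((∑ s ∈ (Fintype.piFinset fun t => piAntidiag univ (n t)).filter
        (fun s => ∀ a, ((∑ t, s t a.castSucc : ℕ) : ℤ) ≡ g a [ZMOD d]),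
      ∏ t, (Nat.multinomial univ (s t) : ℝ) * ∏ j, α t j ^ s t j) - 1 / (d : ℝ) ^ m : ℝ) : ℂ)
      = ((d : ℂ) ^ m)⁻¹ * ∑ r ∈ univ.erase (fun _ : Fin m => (0 : ZMod d)),
          fourierTerm (fun t j => (α t j : ℂ)) g n r := by
  simp only [Complex.ofReal_sub, Complex.ofReal_sum, Complex.ofReal_prod, Complex.ofReal_mul,
    Complex.ofReal_natCast, Complex.ofReal_pow, Complex.ofReal_div, Complex.ofReal_one]
  rw [sum_filter_modEq_eq_sum_fourierTerm, ← add_sum_erase _ _ (mem_univ (fun _ => 0)),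
    fourierTerm_zero]
  simp only [← Complex.ofReal_sum, hsum, Complex.ofReal_one, one_pow, prod_const_one]
  ring

lemma norm_sum_mul_stdAddChar_snoc_le (hm : 0 < m) {α : Fin (m + 1) → ℝ}
    (hsum : ∑ j, α j = 1) {a₀ : ℝ} (ha₀ : 0 ≤ a₀) (hle : ∀ j, a₀ ≤ α j) (r : Fin m → ZMod d) :
    ‖∑ j, (α j : ℂ) * stdAddChar ((Fin.snoc r 0 : Fin (m + 1) → ZMod d) j)‖
      ≤ exp (-(∑ a, a₀ ^ 2 * (8 / (d : ℝ) ^ 2 * ((r a).valMinAbs : ℝ) ^ 2)) / m) := by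
  have : Nonempty (Fin m) := ⟨⟨0, hm⟩⟩
  refine (le_exp_neg_sum_div_card fun a => ?_).trans_eq (by rw [Fintype.card_fin])
  have hchar := norm_sum_ofReal_mul_le (fun j => ha₀.trans (hle j)) hsum
    (z := fun j => stdAddChar ((Fin.snoc r 0 : Fin (m + 1) → ZMod d) j))
    (fun j => (AddChar.norm_apply _ _).le) (Fin.castSucc_lt_last a).ne (by simp)
  rw [Fin.snoc_castSucc] at hchar
  have hαα : a₀ ^ 2 ≤ α a.castSucc * α (Fin.last m) := by
    rw [sq]; exact mul_le_mul (hle _) (hle _) ha₀ (ha₀.trans (hle _))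
  calc _ ≤ 1 - α a.castSucc * α (Fin.last m) * (1 - (stdAddChar (r a)).re) := hchar
    _ ≤ 1 - a₀ ^ 2 * (8 / (d : ℝ) ^ 2 * ((r a).valMinAbs : ℝ) ^ 2) := by
        gcongr 1 - ?_
        exact mul_le_mul hαα (sq_valMinAbs_le_one_sub_re_stdAddChar (r a)) (by positivity)
          ((sq_nonneg a₀).trans hαα)
    _ ≤ _ := add_one_le_exp _ |>.trans_eq' (by ring)

lemma norm_fourierTerm_le (hm : 0 < m) {α : Fin q → Fin (m + 1) → ℝ}
    (hsum : ∀ t, ∑ j, α t j = 1) {a₀ : ℝ} (ha₀ : 0 ≤ a₀) (hle : ∀ t j, a₀ ≤ α t j)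
    (g : Fin m → ℤ) (n : Fin q → ℕ) (r : Fin m → ZMod d) :
    ‖fourierTerm (fun t j => (α t j : ℂ)) g n r‖
      ≤ ∏ a, exp (-(8 * a₀ ^ 2 * (∑ t, n t) / (m * d ^ 2) * ((r a).valMinAbs : ℝ) ^ 2)) := by
  set E := exp (-(∑ a, a₀ ^ 2 * (8 / (d : ℝ) ^ 2 * ((r a).valMinAbs : ℝ) ^ 2)) / m)
  calc ‖fourierTerm (fun t j => (α t j : ℂ)) g n r‖
      = ∏ t, ‖∑ j, (α t j : ℂ) * stdAddChar ((Fin.snoc r 0 : Fin (m + 1) → ZMod d) j)‖ ^ n t := by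
        simp [fourierTerm, norm_prod]
    _ ≤ ∏ t, E ^ n t := prod_le_prod (fun _ _ => by positivity) fun t _ =>
        pow_le_pow_left₀ (norm_nonneg _)
          (norm_sum_mul_stdAddChar_snoc_le hm (hsum t) ha₀ (hle t) r) _
    _ = _ := by
        rw [prod_pow_eq_pow_sum, ← exp_nat_mul, ← exp_sum]
        congr 1
        rw [neg_div, sum_div, mul_neg, mul_sum, ← sum_neg_distrib]
        refine sum_congr rfl fun a _ => ?_
        field_simp

theorem abs_sum_filter_modEq_sub_inv_pow_le (hm : 0 < m) {α : Fin q → Fin (m + 1) → ℝ}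
    (hsum : ∀ t, ∑ j, α t j = 1) {a₀ : ℝ} (ha₀ : 0 < a₀) (hle : ∀ t j, a₀ ≤ α t j)
    (g : Fin m → ℤ) (n : Fin q → ℕ) (hn : 0 < ∑ t, n t) :
    |∑ s ∈ (Fintype.piFinset fun t => piAntidiag univ (n t)).filter
        (fun s => ∀ a, ((∑ t, s t a.castSucc : ℕ) : ℤ) ≡ g a [ZMOD d]),
      ∏ t, (Nat.multinomial univ (s t) : ℝ) * ∏ j, α t j ^ s t j - 1 / (d : ℝ) ^ m|
      ≤ 4 * m * √(m / (8 * a₀ ^ 2)) / √(∑ t, n t : ℕ) := by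
  set N : ℕ := ∑ t, n t
  set γ : ℝ := 8 * a₀ ^ 2 * N / (m * d ^ 2) with hγdef
  set h : ZMod d → ℝ := fun u => exp (-(γ * (u.valMinAbs : ℝ) ^ 2))
  have hd : (0 : ℝ) < d := by exact_mod_cast NeZero.pos d
  have hγ : 0 < γ := by positivity
  have hsqrt : √N = √(m / (8 * a₀ ^ 2)) * √γ * d := by
    rw [← sqrt_mul (by positivity), ← sqrt_sq hd.le, ← sqrt_mul (by positivity), hγdef]
    congr 1
    field_simp
  rw [← Real.norm_eq_abs, ← Complex.norm_real, ofReal_sum_filter_modEq_sub_eq_sum_erase hsum,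
    norm_mul, norm_inv, norm_pow, Complex.norm_natCast]
  calc _ ≤ ((Fintype.card (ZMod d) : ℝ) ^ m)⁻¹ *
          ∑ r ∈ univ.erase (fun _ : Fin m => (0 : ZMod d)), ∏ a, h (r a) := by
        rw [ZMod.card]
        gcongr
        exact (norm_sum_le _ _).trans (sum_le_sum fun r _ =>
          norm_fourierTerm_le hm hsum ha₀.le hle g n r)
    _ ≤ m * (∑ u, h u - 1) / Fintype.card (ZMod d) :=
        inv_pow_card_mul_sum_erase_prod_le m (by simp [h]) (fun _ => (exp_pos _).le)
          fun u => exp_le_one_iff.2 (by simp only [neg_nonpos]; positivity)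
    _ ≤ m * (4 / √γ) / d := by
        rw [ZMod.card]
        gcongr
        linarith [sum_exp_neg_mul_sq_valMinAbs_le (d := d) hγ]
    _ = 4 * m * √(m / (8 * a₀ ^ 2)) / √N := by
        rw [hsqrt]
        field_simp

end

theorem statement7_general (q k : ℕ) (hq : 1 ≤ q) (hk : 2 ≤ k)
    (α : Fin q → Fin k → ℝ)
    (hα0 : ∀ t j, 0 < α t j)
    (hαsum : ∀ t, ∑ j, α t j = 1) :
    ∃ C : ℝ, 0 < C ∧ ∀ n : ℕ, 2 ≤ n → ∀ d : ℕ, 1 ≤ d →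
      ∀ g : Fin (k - 1) → ℤ, ∀ idx : Fin q → ℕ,
        (∀ t, idx t ≤ n) → (∑ t, idx t = n) →
        |(∑ s ∈ (Fintype.piFinset (fun t : Fin q =>
              Fintype.piFinset (fun _ : Fin k => Finset.range (idx t + 1)))).filter
                (fun s => (∀ t, ∑ j, s t j = idx t) ∧
                  ∀ a : Fin (k - 1),
                    ((∑ t, s t (Fin.castLE (Nat.sub_le k 1) a) : ℕ) : ℤ) ≡ g a [ZMOD (d : ℤ)]),
            ∏ t, (Nat.multinomial Finset.univ (s t) : ℝ) * ∏ j, α t j ^ s t j)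
          - 1 / (d : ℝ) ^ (k - 1)|
        ≤ C * Real.log n / Real.sqrt n := by
  obtain ⟨m, rfl⟩ : ∃ m, k = m + 1 := ⟨k - 1, by omega⟩
  have hm : 0 < m := by omega
  have : Nonempty (Fin q × Fin (m + 1)) := ⟨(⟨0, hq⟩, 0)⟩
  obtain ⟨⟨t₀, j₀⟩, hmin⟩ := Finite.exists_min fun p : Fin q × Fin (m + 1) => α p.1 p.2
  set K := 4 * m * √(m / (8 * α t₀ j₀ ^ 2))
  have hlog2 : 0 < log 2 := log_pos one_lt_two
  refine ⟨(K + 1) / log 2, by positivity, fun n hn d hd g idx _ hidx => ?_⟩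
  have : NeZero d := ⟨by omega⟩
  rw [filter_piFinset_range_eq_filter_piAntidiag]
  have hlog : log 2 ≤ log n := log_le_log two_pos (by exact_mod_cast hn)
  calc _ ≤ K / √n := by
        have := abs_sum_filter_modEq_sub_inv_pow_le (d := d) hm hαsum (hα0 t₀ j₀)
          (fun t j => hmin (t, j)) g idx (by omega)
        rwa [hidx] at this
    _ ≤ (K + 1) / log 2 * log n / √n := by
        gcongr
        rw [div_mul_eq_mul_div, le_div_iff₀ hlog2]
        nlinarith [show 0 ≤ K by positivity]

theorem statement7 (q k : ℕ) (hq : 1 ≤ q) (hk : 2 ≤ k)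
    (α : Fin q → Fin k → ℝ)
    (hα0 : ∀ t j, 0 < α t j) (hα1 : ∀ t j, α t j < 1)
    (hαsum : ∀ t, ∑ j, α t j = 1) :
    ∃ C : ℝ, 0 < C ∧ ∀ n : ℕ, 2 ≤ n → ∀ d : ℕ, 1 ≤ d →
      ∀ g : Fin (k - 1) → ℤ, ∀ idx : Fin q → ℕ,
        (∀ t, idx t ≤ n) → (∑ t, idx t = n) →
        |(∑ s ∈ (Fintype.piFinset (fun t : Fin q =>
              Fintype.piFinset (fun _ : Fin k => Finset.range (idx t + 1)))).filter
                (fun s => (∀ t, ∑ j, s t j = idx t) ∧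
                  ∀ a : Fin (k - 1),
                    ((∑ t, s t (Fin.castLE (Nat.sub_le k 1) a) : ℕ) : ℤ) ≡ g a [ZMOD (d : ℤ)]),
            ∏ t, (Nat.multinomial Finset.univ (s t) : ℝ) * ∏ j, α t j ^ s t j)
          - 1 / (d : ℝ) ^ (k - 1)|
        ≤ C * Real.log n / Real.sqrt n :=
  statement7_general q k hq hk α hα0 hαsum
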